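/- arXiv:2311.07324 — 3 statements merged into one kernel-verified Lean document; each statement's English description precedes it below -/
import Mathlib

section
/- Let n ≥ 2, p_1 ≥ p_2 ≥ ... ≥ p_n > 0, δ̄ > 0, and fix j ∈ {1,...,n-1}. Define P = ∑_{i=1}^n p_i^{2/3} and Q_j = (P - p_j^{2/3})/p_n^{2/3}. For δ_j ∈ (0, nδ̄/(Q_j+1)], the function H(δ_j) = p_j/δ_j + (P - p_j^{2/3})^{3/2} / √((nδ̄ - δ_j)δ_j) is strictly decreasing, i.e., its derivative H'(δ_j) = -p_j δ_j^{-2} - (1/2)(P - p_j^{2/3})^{3/2}[(nδ̄ - δ_j)δ_j]^{-3/2}(nδ̄ - 2δ_j) is negative on this interval. -/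
open Finset Real

/-! On `(0, c/2]` both terms of `a/δ + b/√((c - δ)δ)` decrease: the second because `(c - δ)δ`
increases up to its vertex `c/2`, and the same vertex bound gives `c - 2δ ≥ 0`, so the derivative is
negative. Since `j` is not the last index, `P - p_j^{2/3} ≥ p_n^{2/3}`, i.e. `Q ≥ 1`, which puts
`nδ̄/(Q + 1)` below the vertex `nδ̄/2`. -/

/-- After the Lagrange step, the objective depends on `δ` alone through this function, with
`a = p_j`, `b = (P - p_j^{2/3})^{3/2}` and `c = n δ̄`. -/
noncomputable def reducedObjective (a b c δ : ℝ) : ℝ :=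
  a / δ + b / √((c - δ) * δ)

/-- The derivative of `reducedObjective a b c` at a point `δ ∈ (0, c)`. -/
noncomputable def reducedObjectiveDeriv (a b c δ : ℝ) : ℝ :=
  -a * δ ^ (-(2:ℝ)) - (1/2) * b * ((c - δ) * δ) ^ (-(3:ℝ)/2) * (c - 2 * δ)

lemma strictMonoOn_sub_mul_self (c : ℝ) :
    StrictMonoOn (fun x => (c - x) * x) (Set.Iic (c / 2)) := by
  intro x hx y hy hxy
  simp only [Set.mem_Iic] at hx hy
  nlinarith

lemma Ioc_div_add_one_subset {Q : ℝ} (hQ : 1 ≤ Q) (c : ℝ) :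
    Set.Ioc 0 (c / (Q + 1)) ⊆ Set.Ioc 0 (c / 2) := by
  rintro δ ⟨hδ, hδc⟩
  rw [le_div_iff₀ (by linarith)] at hδc
  exact ⟨hδ, by rw [le_div_iff₀ two_pos]; nlinarith⟩

lemma sub_mul_self_pos {c δ : ℝ} (hδ : δ ∈ Set.Ioc 0 (c / 2)) : 0 < (c - δ) * δ := by
  obtain ⟨hδ0, hδc⟩ := hδ
  exact mul_pos (by linarith) hδ0

lemma reducedObjective_strictAntiOn {a b : ℝ} (ha : 0 < a) (hb : 0 ≤ b) (c : ℝ) :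
    StrictAntiOn (reducedObjective a b c) (Set.Ioc 0 (c / 2)) := by
  have hfirst : StrictAntiOn (fun δ : ℝ => a / δ) (Set.Ioc 0 (c / 2)) :=
    fun x hx _ _ hxy => div_lt_div_of_pos_left ha hx.1 hxy
  have hsecond : AntitoneOn (fun δ : ℝ => b / √((c - δ) * δ)) (Set.Ioc 0 (c / 2)) := by
    intro x hx y hy hxy
    refine div_le_div_of_nonneg_left hb (sqrt_pos.2 (sub_mul_self_pos hx)) (sqrt_le_sqrt ?_)
    exact (strictMonoOn_sub_mul_self c).monotoneOn hx.2 hy.2 hxy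
  exact hfirst.add_antitone hsecond

lemma reducedObjectiveDeriv_neg {a b c δ : ℝ} (ha : 0 < a) (hb : 0 ≤ b)
    (hδ : δ ∈ Set.Ioc 0 (c / 2)) : reducedObjectiveDeriv a b c δ < 0 := by
  have hfirst : 0 < a * δ ^ (-(2:ℝ)) := mul_pos ha (rpow_pos_of_pos hδ.1 _)
  have hsecond : 0 ≤ (1/2) * b * ((c - δ) * δ) ^ (-(3:ℝ)/2) * (c - 2 * δ) := by
    have := rpow_nonneg (sub_mul_self_pos hδ).le (-(3:ℝ)/2)
    have : 0 ≤ c - 2 * δ := by linarith [hδ.2]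
    positivity
  unfold reducedObjectiveDeriv
  linarith

lemma le_sum_sub_of_ne {ι : Type*} [Fintype ι] {f : ι → ℝ} (hf : ∀ i, 0 ≤ f i) {j k : ι}
    (hjk : j ≠ k) : f k ≤ ∑ i, f i - f j := by
  have := add_le_sum (fun i _ => hf i) (mem_univ j) (mem_univ k) hjk
  linarith

theorem stmt_4 (n : ℕ) (p : Fin n → ℝ) (dbar : ℝ)
    (hp : ∀ i, 0 < p i) (j : Fin n) (hj : (j : ℕ) < n - 1)
    (P Q : ℝ) (hP : P = ∑ i, (p i) ^ ((2:ℝ)/3))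
    (hQ : Q = (P - (p j) ^ ((2:ℝ)/3)) / (p ⟨n-1, by omega⟩) ^ ((2:ℝ)/3)) :
    StrictAntiOn
      (fun δ : ℝ => p j / δ +
        (P - (p j) ^ ((2:ℝ)/3)) ^ ((3:ℝ)/2) / Real.sqrt ((n * dbar - δ) * δ))
      (Set.Ioc 0 (n * dbar / (Q + 1))) ∧
    ∀ δ ∈ Set.Ioc (0:ℝ) (n * dbar / (Q + 1)),
      -(p j) * δ ^ (-(2:ℝ))
        - (1/2) * (P - (p j) ^ ((2:ℝ)/3)) ^ ((3:ℝ)/2)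
            * ((n * dbar - δ) * δ) ^ (-(3:ℝ)/2) * (n * dbar - 2 * δ) < 0 := by
  set k : Fin n := ⟨n-1, by omega⟩
  have hjk : j ≠ k := Fin.ne_of_val_ne (by simp only [k]; omega)
  have hpk : 0 < p k ^ ((2:ℝ)/3) := rpow_pos_of_pos (hp k) _
  have hkA : p k ^ ((2:ℝ)/3) ≤ P - p j ^ ((2:ℝ)/3) :=
    hP ▸ le_sum_sub_of_ne (fun i => (rpow_pos_of_pos (hp i) _).le) hjk
  have hQ1 : 1 ≤ Q := by rwa [hQ, one_le_div hpk]
  have hb : 0 ≤ (P - p j ^ ((2:ℝ)/3)) ^ ((3:ℝ)/2) := rpow_nonneg (hpk.le.trans hkA) _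
  have hsub := Ioc_div_add_one_subset hQ1 (n * dbar)
  exact ⟨(reducedObjective_strictAntiOn (hp j) hb _).mono hsub,
    fun δ hδ => reducedObjectiveDeriv_neg (hp j) hb (hsub hδ)⟩
end

section
/- Let n ≥ 2, positive weights p_1 ≥ ... ≥ p_n > 0 with ∑ p_i = 1, δ̄ > 0, and positive compression ratios δ_1,...,δ_n with ∑_{i=1}^n δ_i = nδ̄. Let j be an index with δ_j = min_i δ_i. Then Φ(δ_1,...,δ_n) := (∑_{i=1}^n p_i/√(δ_i))/√(δ_j) ≥ p_j/δ_j + (P - p_j^{2/3})^{3/2}/√((nδ̄ - δ_j)δ_j), where P = ∑_{i=1}^n p_i^{2/3}. -/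
open Finset Real

/-!
Split off the `j`-th term of `∑ pᵢ / √δᵢ`. For the remaining indices, Hölder's inequality gives
`(∑_{i ≠ j} pᵢ^{2/3})^{3/2} ≤ (∑_{i ≠ j} pᵢ / √δᵢ) · √(∑_{i ≠ j} δᵢ)`, and `∑_{i ≠ j} δᵢ = n δ̄ - δⱼ`.
-/

section HolderTwoThirds

variable {ι : Type*} (s : Finset ι) {a b : ι → ℝ}

theorem sum_rpow_two_thirds_le (ha : ∀ i ∈ s, 0 ≤ a i) (hb : ∀ i ∈ s, 0 < b i) :
    ∑ i ∈ s, a i ^ (2 / 3 : ℝ)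
      ≤ (∑ i ∈ s, a i / √(b i)) ^ (2 / 3 : ℝ) * (∑ i ∈ s, b i) ^ (1 / 3 : ℝ) := by
  have hquot : ∀ i ∈ s, 0 ≤ a i / √(b i) := fun i hi => div_nonneg (ha i hi) (sqrt_nonneg _)
  have hprod : ∀ i ∈ s, (a i / √(b i)) ^ (2 / 3 : ℝ) * b i ^ (1 / 3 : ℝ) = a i ^ (2 / 3 : ℝ) := by
    intro i hi
    rw [div_rpow (ha i hi) (sqrt_nonneg _), sqrt_eq_rpow, ← rpow_mul (hb i hi).le,
      show (1 / 2 : ℝ) * (2 / 3) = 1 / 3 by norm_num,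
      div_mul_cancel₀ _ (rpow_pos_of_pos (hb i hi) _).ne']
  have holder := inner_le_Lp_mul_Lq_of_nonneg s (f := fun i => (a i / √(b i)) ^ (2 / 3 : ℝ))
    (g := fun i => b i ^ (1 / 3 : ℝ)) (p := 3 / 2) (q := 3) ⟨by norm_num, by norm_num, by norm_num⟩
    (fun i hi => rpow_nonneg (hquot i hi) _) (fun i hi => rpow_nonneg (hb i hi).le _)
  have hf : ∀ i ∈ s, ((a i / √(b i)) ^ (2 / 3 : ℝ)) ^ (3 / 2 : ℝ) = a i / √(b i) := fun i hi => by
    rw [← rpow_mul (hquot i hi)]; norm_num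
  have hg : ∀ i ∈ s, (b i ^ (1 / 3 : ℝ)) ^ (3 : ℝ) = b i := fun i hi => by
    rw [← rpow_mul (hb i hi).le]; norm_num
  rw [sum_congr rfl hprod, sum_congr rfl hf, sum_congr rfl hg] at holder
  convert holder using 3
  norm_num

theorem sum_rpow_two_thirds_rpow_three_halves_le (ha : ∀ i ∈ s, 0 ≤ a i)
    (hb : ∀ i ∈ s, 0 < b i) :
    (∑ i ∈ s, a i ^ (2 / 3 : ℝ)) ^ (3 / 2 : ℝ) ≤ (∑ i ∈ s, a i / √(b i)) * √(∑ i ∈ s, b i) := by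
  have hA : 0 ≤ ∑ i ∈ s, a i / √(b i) := sum_nonneg fun i hi => div_nonneg (ha i hi) (sqrt_nonneg _)
  have hB : 0 ≤ ∑ i ∈ s, b i := sum_nonneg fun i hi => (hb i hi).le
  calc (∑ i ∈ s, a i ^ (2 / 3 : ℝ)) ^ (3 / 2 : ℝ)
      ≤ ((∑ i ∈ s, a i / √(b i)) ^ (2 / 3 : ℝ) * (∑ i ∈ s, b i) ^ (1 / 3 : ℝ)) ^ (3 / 2 : ℝ) :=
        rpow_le_rpow (sum_nonneg fun i hi => rpow_nonneg (ha i hi) _)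
          (sum_rpow_two_thirds_le s ha hb) (by norm_num)
    _ = (∑ i ∈ s, a i / √(b i)) * √(∑ i ∈ s, b i) := by
        rw [mul_rpow (rpow_nonneg hA _) (rpow_nonneg hB _), ← rpow_mul hA, ← rpow_mul hB,
          sqrt_eq_rpow]
        norm_num

end HolderTwoThirds

theorem stmt_6_general (n : ℕ) (p δ : Fin n → ℝ) (dbar : ℝ)
    (hp : ∀ i, 0 < p i)
    (hδ : ∀ i, 0 < δ i) (hδsum : ∑ i, δ i = n * dbar)
    (j : Fin n)
    (P : ℝ) (hP : P = ∑ i, (p i) ^ ((2:ℝ)/3)) :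
    (∑ i, p i / Real.sqrt (δ i)) / Real.sqrt (δ j)
      ≥ p j / δ j +
        (P - (p j) ^ ((2:ℝ)/3)) ^ ((3:ℝ)/2) / Real.sqrt ((n * dbar - δ j) * δ j) := by
  set S := univ.erase j
  have hrest : n * dbar - δ j = ∑ i ∈ S, δ i := by
    rw [← hδsum, ← add_sum_erase _ _ (mem_univ j), add_sub_cancel_left]
  have hP' : P - p j ^ (2 / 3 : ℝ) = ∑ i ∈ S, p i ^ (2 / 3 : ℝ) := by
    rw [hP, ← add_sum_erase _ _ (mem_univ j), add_sub_cancel_left]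
  have hrest_nonneg : 0 ≤ ∑ i ∈ S, δ i := sum_nonneg fun i _ => (hδ i).le
  have holder : (∑ i ∈ S, p i ^ (2 / 3 : ℝ)) ^ (3 / 2 : ℝ) / √(∑ i ∈ S, δ i)
      ≤ ∑ i ∈ S, p i / √(δ i) :=
    div_le_of_le_mul₀ (sqrt_nonneg _)
      (sum_nonneg fun i _ => div_nonneg (hp i).le (sqrt_nonneg _))
      (sum_rpow_two_thirds_rpow_three_halves_le S (fun i _ => (hp i).le) (fun i _ => hδ i))
  rw [← add_sum_erase _ _ (mem_univ j), add_div, div_div, mul_self_sqrt (hδ j).le, hrest, hP',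
    sqrt_mul hrest_nonneg, ← div_div, ge_iff_le]
  gcongr

theorem stmt_6 (n : ℕ) (hn : 2 ≤ n) (p δ : Fin n → ℝ) (dbar : ℝ)
    (hp : ∀ i, 0 < p i) (hmono : ∀ i j : Fin n, i ≤ j → p j ≤ p i)
    (hpsum : ∑ i, p i = 1) (hd : 0 < dbar)
    (hδ : ∀ i, 0 < δ i) (hδsum : ∑ i, δ i = n * dbar)
    (j : Fin n) (hmin : ∀ i, δ j ≤ δ i)
    (P : ℝ) (hP : P = ∑ i, (p i) ^ ((2:ℝ)/3)) :
    (∑ i, p i / Real.sqrt (δ i)) / Real.sqrt (δ j)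
      ≥ p j / δ j +
        (P - (p j) ^ ((2:ℝ)/3)) ^ ((3:ℝ)/2) / Real.sqrt ((n * dbar - δ j) * δ j) :=
  stmt_6_general n p δ dbar hp hδ hδsum j P hP
end

section
/- Let n ≥ 1, p_1,...,p_n > 0, and λ̄ > 0. Among positive (λ_1,...,λ_n) satisfying ∑_{i=1}^n λ_i^{-1} = n/λ̄, the quantity ∑_{i=1}^n p_i² λ_i² is minimized at λ_i = (λ̄ P / n) · p_i^{-2/3} for all i, where P = ∑_{i=1}^n p_i^{2/3}; the minimal value equals λ̄² P³/n². -/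
open Finset Real

theorem stmt_11 (n : ℕ) (hn : 1 ≤ n) (p : Fin n → ℝ) (lbar : ℝ)
    (hp : ∀ i, 0 < p i) (hlbar : 0 < lbar)
    (P : ℝ) (hP : P = ∑ i, (p i) ^ ((2:ℝ)/3)) :
    (∀ lam : Fin n → ℝ, (∀ i, 0 < lam i) → (∑ i, (lam i)⁻¹ = n / lbar) →
      ∑ i, (p i) ^ 2 * (lam i) ^ 2 ≥ lbar ^ 2 * P ^ 3 / n ^ 2) ∧
    (∀ lam : Fin n → ℝ, (∀ i, lam i = (lbar * P / n) * (p i) ^ (-(2:ℝ)/3)) →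
      (∀ i, 0 < lam i) ∧ (∑ i, (lam i)⁻¹ = n / lbar) ∧
      ∑ i, (p i) ^ 2 * (lam i) ^ 2 = lbar ^ 2 * P ^ 3 / n ^ 2) := by
  have hn0 : (0:ℝ) < n := by exact_mod_cast hn
  have hPpos : 0 < P := by
    rw [hP]
    apply Finset.sum_pos
    · intro i _
      exact Real.rpow_pos_of_pos (hp i) _
    · have : Nonempty (Fin n) := ⟨⟨0, by omega⟩⟩
      exact Finset.univ_nonempty
  constructor
  · intro lam hlam hsum
    set S : ℝ := ∑ i, (p i) ^ 2 * (lam i) ^ 2 with hS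
    have hSpos : 0 < S := by
      apply Finset.sum_pos
      · intro i _
        have := hp i; have := hlam i; positivity
      · have : Nonempty (Fin n) := ⟨⟨0, by omega⟩⟩
        exact Finset.univ_nonempty
    set f : Fin n → ℝ := fun i => (p i ^ 2 * lam i ^ 2) ^ ((1:ℝ)/3) with hf
    set g : Fin n → ℝ := fun i => ((lam i)⁻¹) ^ ((2:ℝ)/3) with hg
    have key := Real.inner_le_Lp_mul_Lq_of_nonneg (s := Finset.univ) (f := f) (g := g)
        (p := 3) (q := 3/2) (by constructor <;> norm_num)
        (fun i _ => Real.rpow_nonneg (by have := hp i; have := hlam i; positivity) _)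
        (fun i _ => Real.rpow_nonneg (inv_nonneg.mpr (hlam i).le) _)
    have hfg : ∀ i, f i * g i = (p i) ^ ((2:ℝ)/3) := by
      intro i
      have hpi := hp i
      have hli := hlam i
      rw [hf, hg]
      simp only
      rw [Real.mul_rpow (by positivity) (by positivity),
        Real.inv_rpow hli.le,
        ← Real.rpow_natCast (p i) 2, ← Real.rpow_natCast (lam i) 2,
        ← Real.rpow_mul hpi.le, ← Real.rpow_mul hli.le]
      rw [show ((2:ℕ):ℝ) * ((1:ℝ)/3) = 2/3 from by norm_num,
        mul_assoc, mul_inv_cancel₀ (ne_of_gt (Real.rpow_pos_of_pos hli _)), mul_one]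
    have hf3 : ∀ i, f i ^ (3:ℝ) = p i ^ 2 * lam i ^ 2 := by
      intro i
      rw [hf]
      simp only
      rw [← Real.rpow_mul (by have := hp i; have := hlam i; positivity)]
      norm_num
    have hg32 : ∀ i, g i ^ ((3:ℝ)/2) = (lam i)⁻¹ := by
      intro i
      rw [hg]
      simp only
      rw [← Real.rpow_mul (inv_nonneg.mpr (hlam i).le)]
      norm_num
    simp only [hfg, hf3, hg32] at key
    rw [← hP, ← hS, hsum] at key
    -- key : P ≤ S ^ (1/3) * (n/lbar) ^ (1/(3/2))
    have h23 : (1:ℝ)/((3:ℝ)/2) = 2/3 := by norm_num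
    rw [h23] at key
    have hnl : (0:ℝ) ≤ (n:ℝ)/lbar := by positivity
    have hcube : P ^ 3 ≤ S * ((n:ℝ)/lbar) ^ 2 := by
      have := pow_le_pow_left₀ hPpos.le key 3
      calc P ^ 3 ≤ (S ^ ((1:ℝ)/3) * ((n:ℝ)/lbar) ^ ((2:ℝ)/3)) ^ 3 := this
        _ = S * ((n:ℝ)/lbar) ^ 2 := by
            rw [mul_pow, ← Real.rpow_natCast (S ^ ((1:ℝ)/3)) 3,
              ← Real.rpow_natCast (((n:ℝ)/lbar) ^ ((2:ℝ)/3)) 3,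
              ← Real.rpow_mul hSpos.le, ← Real.rpow_mul hnl]
            norm_num
    have hne : ((n:ℝ)/lbar) ^ 2 > 0 := by positivity
    rw [ge_iff_le, div_le_iff₀ (by positivity)]
    calc lbar ^ 2 * P ^ 3 ≤ lbar ^ 2 * (S * ((n:ℝ)/lbar) ^ 2) := by nlinarith
      _ = S * (n:ℝ) ^ 2 := by field_simp
  · intro lam hlam
    have hc : 0 < lbar * P / n := by positivity
    have hli : ∀ i, 0 < lam i := by
      intro i
      rw [hlam i]
      exact mul_pos hc (Real.rpow_pos_of_pos (hp i) _)
    refine ⟨hli, ?_, ?_⟩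
    · have : ∀ i, (lam i)⁻¹ = (n / (lbar * P)) * (p i) ^ ((2:ℝ)/3) := by
        intro i
        rw [hlam i, mul_inv, ← Real.rpow_neg (hp i).le]
        rw [show -(-(2:ℝ)/3) = 2/3 by norm_num]
        congr 1
        field_simp
      rw [Finset.sum_congr rfl (fun i _ => this i), ← Finset.mul_sum, ← hP]
      field_simp
    · have : ∀ i, (p i) ^ 2 * (lam i) ^ 2 = (lbar * P / n) ^ 2 * (p i) ^ ((2:ℝ)/3) := by
        intro i
        rw [hlam i, mul_pow, ← Real.rpow_natCast ((p i) ^ (-(2:ℝ)/3)) 2,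
          ← Real.rpow_mul (hp i).le, ← Real.rpow_natCast (p i) 2,
          mul_left_comm,
          ← Real.rpow_add (hp i)]
        norm_num
      rw [Finset.sum_congr rfl (fun i _ => this i), ← Finset.mul_sum, ← hP]
      field_simp
end
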